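/- arXiv:2307.12302 — 2 statements merged into one kernel-verified Lean document; each statement's English description precedes it below -/
import Mathlib

section
/- Trace saturation from local swap lemmas: suppose an abstract transition system satisfies (i) the ε/O commutation lemma, (ii) the P/ε commutation lemma, and (iii) the adjacent-swap lemma (if κ₁ →_{(t₁,d₁)} κ₂ →_{(t₂,d₂)} κ₃ with d₁, d₂ independent and (t₁ ∈ Σ_P or t₂ ∈ Σ_O), then ∃κ₂', κ₁ →_{(t₂,d₂)} κ₂' →_{(t₁,d₁)} κ₃). Define the trace language Tr as the set of data words w such that there is a run from the initial configuration reading w interleaved with arbitrary ε-steps. Then Tr is saturated: if w₁·(t₁,d₁)·(t₂,d₂)·w₂ ∈ Tr with d₁, d₂ independent and (t₁ ∈ Σ_P or t₂ ∈ Σ_O), then w₁·(t₂,d₂)·(t₁,d₁)·w₂ ∈ Tr. -/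
/-- `k`-fold iteration of the partial predecessor function. -/
def predIter {D : Type} (pred : D → Option D) : ℕ → D → Option D
  | 0, d => some d
  | n + 1, d => (pred d).bind (predIter pred n)

/-- `d₁` and `d₂` are independent: neither is an iterated predecessor of the other. -/
def Indep {D : Type} (pred : D → Option D) (d₁ d₂ : D) : Prop :=
  ∀ k : ℕ, predIter pred k d₂ ≠ some d₁ ∧ predIter pred k d₁ ≠ some d₂

/-- A data language `L ⊆ (Σ × D)*` is saturated: adjacent letters on independent
data may be swapped, provided the first is a P-letter or the second an O-letter.
`isO t` means `t ∈ Σ_O`; `t ∈ Σ_P` iff `¬ isO t`. -/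
def Saturated {Γ D : Type} (isO : Γ → Prop) (pred : D → Option D)
    (L : Set (List (Γ × D))) : Prop :=
  ∀ (w₁ w₂ : List (Γ × D)) (t₁ t₂ : Γ) (d₁ d₂ : D),
    Indep pred d₁ d₂ → (¬ isO t₁ ∨ isO t₂) →
    w₁ ++ (t₁, d₁) :: (t₂, d₂) :: w₂ ∈ L →
    w₁ ++ (t₂, d₂) :: (t₁, d₁) :: w₂ ∈ L

/-- A run reading the data word `w`, interleaved with arbitrary ε-steps. -/
inductive Trace {K Γ D : Type} (eps : K → K → Prop) (lab : Γ → D → K → K → Prop) :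
    K → List (Γ × D) → K → Prop
  | nil (κ : K) : Trace eps lab κ [] κ
  | eps {κ κ' κ'' : K} {w : List (Γ × D)} :
      eps κ κ' → Trace eps lab κ' w κ'' → Trace eps lab κ w κ''
  | step {κ κ' κ'' : K} {t : Γ} {d : D} {w : List (Γ × D)} :
      lab t d κ κ' → Trace eps lab κ' w κ'' → Trace eps lab κ ((t, d) :: w) κ''

/-! The ε-steps that separate the two letters are first moved out of the way: a P-letter
commutes rightwards past ε-steps, an O-letter leftwards. The two letters are then adjacent
and the swap lemma exchanges them. Since the swap is local, it lifts to any prefix. -/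

open Relation

namespace Relation

variable {α : Type*} {r s : α → α → Prop} {a b c : α}

theorem ReflTransGen.exists_comp_of_comm_left
    (h : ∀ a b c, r a b → s b c → ∃ b', s a b' ∧ r b' c)
    (hr : ReflTransGen r a b) (hs : s b c) : ∃ b', s a b' ∧ ReflTransGen r b' c := by
  induction hr using ReflTransGen.head_induction_on with
  | refl => exact ⟨c, hs, .refl⟩
  | head hab _ ih =>
    obtain ⟨b', hs', hr'⟩ := ih
    obtain ⟨b'', hs'', hr''⟩ := h _ _ _ hab hs'
    exact ⟨b'', hs'', .head hr'' hr'⟩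

theorem ReflTransGen.exists_comp_of_comm_right
    (h : ∀ a b c, s a b → r b c → ∃ b', r a b' ∧ s b' c)
    (hs : s a b) (hr : ReflTransGen r b c) : ∃ b', ReflTransGen r a b' ∧ s b' c := by
  induction hr with
  | refl => exact ⟨a, .refl, hs⟩
  | tail _ hbc ih =>
    obtain ⟨b', hr', hs'⟩ := ih
    obtain ⟨b'', hr'', hs''⟩ := h _ _ _ hs' hbc
    exact ⟨b'', .tail hr' hr'', hs''⟩

end Relation

namespace Trace

variable {K Γ D : Type} {eps : K → K → Prop} {lab : Γ → D → K → K → Prop}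
  {κ κ' κ'' : K} {w : List (Γ × D)}

theorem of_reflTransGen_eps (h : ReflTransGen eps κ κ') (ht : Trace eps lab κ' w κ'') :
    Trace eps lab κ w κ'' := by
  induction h using ReflTransGen.head_induction_on with
  | refl => exact ht
  | head he _ ih => exact .eps he ih

theorem exists_of_cons {t : Γ} {d : D} (h : Trace eps lab κ ((t, d) :: w) κ'') :
    ∃ κa κb, ReflTransGen eps κ κa ∧ lab t d κa κb ∧ Trace eps lab κb w κ'' := by
  generalize hw : (t, d) :: w = w' at h
  induction h with
  | nil => cases hw
  | eps he _ ih =>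
    obtain ⟨κa, κb, hε, hl, ht⟩ := ih hw
    exact ⟨κa, κb, .head he hε, hl, ht⟩
  | step hl ht _ =>
    cases hw
    exact ⟨_, _, .refl, hl, ht⟩

theorem append_of_forall {u v : List (Γ × D)}
    (huv : ∀ κ, Trace eps lab κ u κ'' → Trace eps lab κ v κ'')
    (h : Trace eps lab κ (w ++ u) κ'') : Trace eps lab κ (w ++ v) κ'' := by
  induction w generalizing κ with
  | nil => exact huv κ h
  | cons x w ih =>
    obtain ⟨κa, κb, hε, hl, ht⟩ := exists_of_cons h
    exact of_reflTransGen_eps hε (.step hl (ih ht))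

theorem swap_head {isO : Γ → Prop} {pred : D → Option D}
    (hEO : ∀ (t : Γ) (d : D) (κ₁ κ₂ κ₃ : K), isO t → eps κ₁ κ₂ → lab t d κ₂ κ₃ →
      ∃ κ₂', lab t d κ₁ κ₂' ∧ eps κ₂' κ₃)
    (hPE : ∀ (t : Γ) (d : D) (κ₁ κ₂ κ₃ : K), ¬ isO t → lab t d κ₁ κ₂ → eps κ₂ κ₃ →
      ∃ κ₂', eps κ₁ κ₂' ∧ lab t d κ₂' κ₃)
    (hswap : ∀ (t₁ t₂ : Γ) (d₁ d₂ : D) (κ₁ κ₂ κ₃ : K), Indep pred d₁ d₂ →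
      (¬ isO t₁ ∨ isO t₂) → lab t₁ d₁ κ₁ κ₂ → lab t₂ d₂ κ₂ κ₃ →
      ∃ κ₂', lab t₂ d₂ κ₁ κ₂' ∧ lab t₁ d₁ κ₂' κ₃)
    {t₁ t₂ : Γ} {d₁ d₂ : D} (hind : Indep pred d₁ d₂) (hside : ¬ isO t₁ ∨ isO t₂)
    (h : Trace eps lab κ ((t₁, d₁) :: (t₂, d₂) :: w) κ'') :
    Trace eps lab κ ((t₂, d₂) :: (t₁, d₁) :: w) κ'' := by
  obtain ⟨κa, κb, hε₁, hl₁, ht₁⟩ := exists_of_cons h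
  obtain ⟨κc, κd, hε₂, hl₂, ht₂⟩ := exists_of_cons ht₁
  refine of_reflTransGen_eps hε₁ ?_
  rcases hside with hP | hO
  · obtain ⟨κe, hε, hl₁'⟩ :=
      ReflTransGen.exists_comp_of_comm_right (hPE t₁ d₁ · · · hP) hl₁ hε₂
    obtain ⟨κf, hl₂', hl₁''⟩ := hswap _ _ _ _ _ _ _ hind (.inl hP) hl₁' hl₂
    exact of_reflTransGen_eps hε (.step hl₂' (.step hl₁'' ht₂))
  · obtain ⟨κe, hl₂', hε⟩ :=
      ReflTransGen.exists_comp_of_comm_left (hEO t₂ d₂ · · · hO) hε₂ hl₂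
    obtain ⟨κf, hl₂'', hl₁'⟩ := hswap _ _ _ _ _ _ _ hind (.inr hO) hl₁ hl₂'
    exact .step hl₂'' (.step hl₁' (of_reflTransGen_eps hε ht₂))

end Trace

/-- trace saturation from the three local swap lemmas:
(i) ε/O commutation, (ii) P/ε commutation, (iii) the adjacent-swap lemma for
independent data.  The trace language of words readable from the initial
configuration is saturated. -/
theorem trace_saturated {K Γ D : Type} (isO : Γ → Prop) (pred : D → Option D)
    (eps : K → K → Prop) (lab : Γ → D → K → K → Prop) (init : K)
    (hEO : ∀ (t : Γ) (d : D) (κ₁ κ₂ κ₃ : K), isO t → eps κ₁ κ₂ → lab t d κ₂ κ₃ →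
      ∃ κ₂', lab t d κ₁ κ₂' ∧ eps κ₂' κ₃)
    (hPE : ∀ (t : Γ) (d : D) (κ₁ κ₂ κ₃ : K), ¬ isO t → lab t d κ₁ κ₂ → eps κ₂ κ₃ →
      ∃ κ₂', eps κ₁ κ₂' ∧ lab t d κ₂' κ₃)
    (hswap : ∀ (t₁ t₂ : Γ) (d₁ d₂ : D) (κ₁ κ₂ κ₃ : K), Indep pred d₁ d₂ →
      (¬ isO t₁ ∨ isO t₂) → lab t₁ d₁ κ₁ κ₂ → lab t₂ d₂ κ₂ κ₃ →
      ∃ κ₂', lab t₂ d₂ κ₁ κ₂' ∧ lab t₁ d₁ κ₂' κ₃) :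
    Saturated isO pred {w | ∃ κ', Trace eps lab init w κ'} := by
  rintro w₁ w₂ t₁ t₂ d₁ d₂ hind hside ⟨κ', htr⟩
  exact ⟨κ', Trace.append_of_forall
    (fun _ => Trace.swap_head hEO hPE hswap hind hside) htr⟩
end

section
/- Plays are stable under swaps of adjacent moves not related by the pointer structure: if s = u·m₁·m₂·v is a play over arena A such that m₂ does not point to m₁, and it is not the case that m₁, m₂ are answers to questions q₁, q₂ with q₂ justifying q₁, then the sequence s' = u·m₂·m₁·v (with pointers unchanged) is also a play (satisfies FORK and WAIT). -/
/-- A justified sequence is a list of moves paired with an optional pointer,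
given as the absolute index of an earlier occurrence.  `isQ m` means the move
`m` is a question (answers are moves with `¬ isQ m`); `enab` is the enabling
relation and `init` the set of initial moves of the arena. -/
def JSeq {M : Type} (isQ : M → Prop) (enab : M → M → Prop) (init : Set M)
    (s : List (M × Option ℕ)) : Prop :=
  (∀ e, s[0]? = some e → e.1 ∈ init ∧ e.2 = none) ∧
  (∀ j e, 0 < j → s[j]? = some e →
    ∃ i e', i < j ∧ e.2 = some i ∧ s[i]? = some e' ∧ enab e'.1 e.1)

/-- The move at position `j` is an answer pointing to (answering) position `i`. -/
def AnswersAt {M : Type} (isQ : M → Prop) (s : List (M × Option ℕ)) (j i : ℕ) : Prop :=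
  ∃ e, s[j]? = some e ∧ ¬ isQ e.1 ∧ e.2 = some i

/-- The question at position `i` is pending in `s`: it occurs and has no answer. -/
def PendingIn {M : Type} (isQ : M → Prop) (s : List (M × Option ℕ)) (i : ℕ) : Prop :=
  (∃ e, s[i]? = some e ∧ isQ e.1) ∧ ∀ j, ¬ AnswersAt isQ s j i

/-- FORK: in any prefix `...q...m` with `m` pointing to `q`, the question `q`
is pending when `m` is played. -/
def FORK {M : Type} (isQ : M → Prop) (s : List (M × Option ℕ)) : Prop :=
  ∀ j i e, s[j]? = some e → e.2 = some i → PendingIn isQ (s.take j) i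

/-- WAIT: in any prefix `...q...a` with `a` answering `q`, all questions
justified by `q` have been answered. -/
def WAIT {M : Type} (isQ : M → Prop) (s : List (M × Option ℕ)) : Prop :=
  ∀ j i, AnswersAt isQ s j i →
    ∀ i' e', i' < j → s[i']? = some e' → isQ e'.1 → e'.2 = some i →
      ∃ j', j' < j ∧ AnswersAt isQ s j' i'

/-- A play: a justified sequence satisfying FORK and WAIT. -/
def Play {M : Type} (isQ : M → Prop) (enab : M → M → Prop) (init : Set M)
    (s : List (M × Option ℕ)) : Prop :=
  JSeq isQ enab init s ∧ FORK isQ s ∧ WAIT isQ s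

/-- Transposition of the indices `n` and `n+1`, used to move pointers along with
the swapped moves. -/
def swapIdx (n k : ℕ) : ℕ :=
  if k = n then n + 1 else if k = n + 1 then n else k

/-- Adjust an entry's pointer for a swap at positions `n`, `n+1`. -/
def remap {M : Type} (n : ℕ) (e : M × Option ℕ) : M × Option ℕ :=
  (e.1, e.2.map (swapIdx n))

private lemma swapIdx_invol (n k : ℕ) : swapIdx n (swapIdx n k) = k := by
  unfold swapIdx; split_ifs <;> omega

private lemma swapIdx_lt (n : ℕ) {i j : ℕ} (h : i < j) (hne : ¬(i = n ∧ j = n + 1)) :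
    swapIdx n i < swapIdx n j := by
  unfold swapIdx; split_ifs <;> omega

private lemma get?_some_lt {M : Type} {l : List M} {k : ℕ} {e : M}
    (h : l[k]? = some e) : k < l.length := by
  by_contra hk
  rw [List.getElem?_eq_none (le_of_not_gt hk)] at h
  cases h

private lemma answersAt_take {M : Type} (isQ : M → Prop) (s : List (M × Option ℕ)) (j k i : ℕ) :
    AnswersAt isQ (s.take j) k i ↔ k < j ∧ AnswersAt isQ s k i := by
  constructor
  · rintro ⟨e, he, hq, hp⟩
    have hk : k < j := lt_of_lt_of_le (get?_some_lt he)
      (by rw [List.length_take]; exact min_le_left j s.length)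
    rw [List.getElem?_take_of_lt hk] at he
    exact ⟨hk, e, he, hq, hp⟩
  · rintro ⟨hk, e, he, hq, hp⟩
    exact ⟨e, by rw [List.getElem?_take_of_lt hk]; exact he, hq, hp⟩

private lemma pendingIn_take {M : Type} (isQ : M → Prop) (s : List (M × Option ℕ)) (j i : ℕ) :
    PendingIn isQ (s.take j) i ↔
      (i < j ∧ ∃ e, s[i]? = some e ∧ isQ e.1) ∧ ∀ k, k < j → ¬ AnswersAt isQ s k i := by
  constructor
  · rintro ⟨⟨e, he, hq⟩, hans⟩
    have hi : i < j := lt_of_lt_of_le (get?_some_lt he)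
      (by rw [List.length_take]; exact min_le_left j s.length)
    rw [List.getElem?_take_of_lt hi] at he
    exact ⟨⟨hi, e, he, hq⟩, fun k hk hA => hans k ((answersAt_take isQ s j k i).mpr ⟨hk, hA⟩)⟩
  · rintro ⟨⟨hi, e, he, hq⟩, hans⟩
    refine ⟨⟨e, by rw [List.getElem?_take_of_lt hi]; exact he, hq⟩, fun k hA => ?_⟩
    obtain ⟨hk, hA⟩ := (answersAt_take isQ s j k i).mp hA
    exact hans k hk hA

private lemma jseq_back {M : Type} {isQ : M → Prop} {enab : M → M → Prop} {init : Set M}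
    {s : List (M × Option ℕ)} (h : JSeq isQ enab init s) :
    ∀ (j : ℕ) e i, s[j]? = some e → e.2 = some i → i < j := by
  intro j e i he hp
  rcases Nat.eq_zero_or_pos j with rfl | hj
  · rw [(h.1 e he).2] at hp; cases hp
  · obtain ⟨i', e', hlt, hp', _, _⟩ := h.2 j e hj he
    rw [hp] at hp'
    injection hp' with hii
    omega


private lemma swapIdx_self (n : ℕ) : swapIdx n n = n + 1 := by
  unfold swapIdx; simp

private lemma swapIdx_succ_self (n : ℕ) : swapIdx n (n + 1) = n := by
  unfold swapIdx; rw [if_neg (by omega), if_pos rfl]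

private lemma swapIdx_of_ne {n k : ℕ} (h1 : k ≠ n) (h2 : k ≠ n + 1) : swapIdx n k = k := by
  unfold swapIdx; rw [if_neg h1, if_neg h2]

private lemma swapIdx_pos {n j : ℕ} (hj : 0 < j) (hn : 0 < n) : 0 < swapIdx n j := by
  unfold swapIdx; split_ifs <;> omega

/-- plays are stable under swaps of adjacent moves not related by
the pointer structure: if `s = u·m₁·m₂·v` is a play, `m₂` does not point to `m₁`,
and it is not the case that `m₁, m₂` are answers to questions `q₁, q₂` with `q₂`
justifying `q₁`, then the swapped sequence (with pointers moved along) is a play. -/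
theorem play_swap_stable {M : Type}
    (isQ : M → Prop) (enab : M → M → Prop) (init : Set M)
    (u v : List (M × Option ℕ)) (m₁ m₂ : M × Option ℕ)
    (hplay : Play isQ enab init (u ++ m₁ :: m₂ :: v))
    (hnp : m₂.2 ≠ some u.length)
    (hna : ¬ (¬ isQ m₁.1 ∧ ¬ isQ m₂.1 ∧
      ∃ i₁ i₂ e₁, m₁.2 = some i₁ ∧ m₂.2 = some i₂ ∧
        (u ++ m₁ :: m₂ :: v)[i₁]? = some e₁ ∧ e₁.2 = some i₂)) :
    Play isQ enab init
      (u ++ remap u.length m₂ :: remap u.length m₁ :: v.map (remap u.length)) := by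
  classical
  obtain ⟨hJ, hFORK, hWAIT⟩ := hplay
  obtain ⟨n, hn⟩ : ∃ n, n = u.length := ⟨_, rfl⟩
  rw [← hn] at hnp ⊢
  set s : List (M × Option ℕ) := u ++ m₁ :: m₂ :: v with hs
  set s' : List (M × Option ℕ) :=
    u ++ remap n m₂ :: remap n m₁ :: v.map (remap n) with hs'
  have hback := jseq_back hJ
  -- entries at positions n and n+1 of s
  have hs_n : s[n]? = some m₁ := by
    rw [hs, List.getElem?_append_right (by omega : u.length ≤ n)]
    have h0 : n - u.length = 0 := by omega
    rw [h0]
    rfl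
  have hs_n1 : s[(n + 1)]? = some m₂ := by
    rw [hs, List.getElem?_append_right (by omega : u.length ≤ n + 1)]
    have h0 : n + 1 - u.length = 1 := by omega
    rw [h0]
    rfl
  -- m₂'s pointer exists and is < n
  obtain ⟨i₂, e₂', hi₂lt, hm₂2, hse₂, henab₂⟩ := hJ.2 (n + 1) m₂ (by omega) hs_n1
  have hi₂n : i₂ < n := by
    rcases Nat.lt_or_ge i₂ n with h | h
    · exact h
    · exfalso; apply hnp; rw [hm₂2]; congr 1; omega
  have hnpos : 0 < n := by omega
  -- translation lemma
  have hT : ∀ k, s'[k]? = (s[(swapIdx n k)]?).map (remap n) := by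
    intro k
    rcases Nat.lt_or_ge k n with hk | hk
    · rw [swapIdx_of_ne (by omega) (by omega)]
      have h1 : s'[k]? = u[k]? := by
        rw [hs']; exact List.getElem?_append_left (show k < u.length by omega)
      have h2 : s[k]? = u[k]? := by
        rw [hs]; exact List.getElem?_append_left (show k < u.length by omega)
      rw [h1, h2]
      cases hu : u[k]? with
      | none => rfl
      | some e =>
        have hse : s[k]? = some e := by rw [h2, hu]
        have hre : remap n e = e := by
          cases he2 : e.2 with
          | none =>
            rw [remap, he2]
            exact Prod.ext rfl he2.symm
          | some i =>
            have hik : i < k := hback k e i hse he2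
            rw [remap, he2]
            refine Prod.ext rfl ?_
            simp [swapIdx_of_ne (show i ≠ n by omega) (show i ≠ n + 1 by omega), he2]
        simp [hre]
    · rcases Nat.lt_or_ge (n + 1) k with hk2 | hk2
      · obtain ⟨d, rfl⟩ : ∃ d, k = n + 2 + d := ⟨k - n - 2, by omega⟩
        rw [swapIdx_of_ne (by omega) (by omega)]
        have h1 : s'[(n + 2 + d)]? = (v.map (remap n))[d]? := by
          rw [hs', List.getElem?_append_right (by omega : u.length ≤ n + 2 + d)]
          have h0 : n + 2 + d - u.length = d + 2 := by omega
          rw [h0]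
          rfl
        have h2 : s[(n + 2 + d)]? = v[d]? := by
          rw [hs, List.getElem?_append_right (by omega : u.length ≤ n + 2 + d)]
          have h0 : n + 2 + d - u.length = d + 2 := by omega
          rw [h0]
          rfl
        rw [h1, h2, List.getElem?_map]
      · rcases Nat.eq_or_lt_of_le hk with rfl | hlt
        · rw [swapIdx_self]
          have h1 : s'[n]? = some (remap n m₂) := by
            rw [hs', List.getElem?_append_right (by omega : u.length ≤ n)]
            have h0 : n - u.length = 0 := by omega
            rw [h0]
            rfl
          rw [h1, hs_n1]
          rfl
        · have hkn : k = n + 1 := by omega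
          subst hkn
          rw [swapIdx_succ_self]
          have h1 : s'[(n + 1)]? = some (remap n m₁) := by
            rw [hs', List.getElem?_append_right (by omega : u.length ≤ n + 1)]
            have h0 : n + 1 - u.length = 1 := by omega
            rw [h0]
            rfl
          rw [h1, hs_n]
          rfl
  -- answers translation
  have hA : ∀ j i, AnswersAt isQ s' j i ↔ AnswersAt isQ s (swapIdx n j) (swapIdx n i) := by
    intro j i
    constructor
    · rintro ⟨e, he, hq, hp⟩
      rw [hT j] at he
      obtain ⟨e₀, he₀, hre⟩ := Option.map_eq_some_iff.mp he
      subst hre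
      obtain ⟨i₀, hi₀, hσi₀⟩ := Option.map_eq_some_iff.mp hp
      have hii : i₀ = swapIdx n i := by
        rw [← hσi₀, swapIdx_invol]
      refine ⟨e₀, he₀, hq, ?_⟩
      rw [hi₀, hii]
    · rintro ⟨e, he, hq, hp⟩
      refine ⟨remap n e, by rw [hT j, he]; rfl, hq, ?_⟩
      show e.2.map (swapIdx n) = some i
      rw [hp]
      simp [swapIdx_invol]
  -- question-at translation
  have hQ : ∀ i, (∃ e, s'[i]? = some e ∧ isQ e.1) ↔
      (∃ e, s[(swapIdx n i)]? = some e ∧ isQ e.1) := by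
    intro i
    constructor
    · rintro ⟨e, he, hq⟩
      rw [hT i] at he
      obtain ⟨e₀, he₀, hre⟩ := Option.map_eq_some_iff.mp he
      exact ⟨e₀, he₀, by rw [← hre] at hq; exact hq⟩
    · rintro ⟨e, he, hq⟩
      exact ⟨remap n e, by rw [hT i, he]; rfl, hq⟩
  -- JSeq for s'
  have hJ' : JSeq isQ enab init s' := by
    constructor
    · intro e he
      rw [hT 0, swapIdx_of_ne (by omega) (by omega)] at he
      obtain ⟨e₀, he₀, hre⟩ := Option.map_eq_some_iff.mp he
      obtain ⟨hmem, hnone⟩ := hJ.1 e₀ he₀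
      subst hre
      exact ⟨hmem, by show e₀.2.map _ = none; rw [hnone]; rfl⟩
    · intro j e hj he
      rw [hT j] at he
      obtain ⟨e₀, he₀, hre⟩ := Option.map_eq_some_iff.mp he
      obtain ⟨i, e', hlt, hp, hse', hen⟩ := hJ.2 (swapIdx n j) e₀ (swapIdx_pos hj hnpos) he₀
      have hne : ¬(i = n ∧ swapIdx n j = n + 1) := by
        rintro ⟨hin, hjn⟩
        rw [hjn, hs_n1] at he₀
        injection he₀ with hh
        apply hnp
        rw [hh, hp, hin]
      have hlt' : swapIdx n i < j := by
        have hx := swapIdx_lt n hlt hne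
        rwa [swapIdx_invol] at hx
      refine ⟨swapIdx n i, remap n e', hlt', ?_, ?_, ?_⟩
      · rw [← hre]
        show e₀.2.map (swapIdx n) = some (swapIdx n i)
        rw [hp]; rfl
      · rw [hT (swapIdx n i), swapIdx_invol, hse']; rfl
      · rw [← hre]; exact hen
  have hback' := jseq_back hJ'
  refine ⟨hJ', ?_, ?_⟩
  -- FORK for s'
  · intro j i e he hp
    rw [hT j] at he
    obtain ⟨e₀, he₀, hre⟩ := Option.map_eq_some_iff.mp he
    have hp₀ : e₀.2 = some (swapIdx n i) := by
      have hx : e.2 = e₀.2.map (swapIdx n) := by rw [← hre]; rfl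
      rw [hp] at hx
      obtain ⟨i₀, hi₀, hσ⟩ := Option.map_eq_some_iff.mp hx.symm
      rw [hi₀, ← hσ, swapIdx_invol]
    have hpend := hFORK (swapIdx n j) (swapIdx n i) e₀ he₀ hp₀
    obtain ⟨⟨hlt0, hq0⟩, hans0⟩ := (pendingIn_take isQ s (swapIdx n j) (swapIdx n i)).mp hpend
    have hij : i < j := hback' j e i (by rw [hT j, he₀, ← hre]; rfl) hp
    refine (pendingIn_take isQ s' j i).mpr ⟨⟨hij, (hQ i).mpr hq0⟩, ?_⟩
    intro k hk hAk
    have hAk' := (hA k i).mp hAk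
    by_cases hexc : k = n ∧ j = n + 1
    · obtain ⟨hk1, hj1⟩ := hexc
      subst hj1
      rw [hk1, swapIdx_self] at hAk'
      rw [swapIdx_succ_self, hs_n] at he₀
      injection he₀ with hh
      subst hh
      -- here e₀ = m₁ points to swapIdx n i, and m₂ answers swapIdx n i
      obtain ⟨e₂, he₂, hq₂, hp₂⟩ := hAk'
      rw [hs_n1] at he₂
      injection he₂ with hh2
      subst hh2
      by_cases hq1 : isQ m₁.1
      · obtain ⟨j', hj', hAj'⟩ := hWAIT (n + 1) (swapIdx n i)
          ⟨m₂, hs_n1, hq₂, hp₂⟩ n m₁ (by omega) hs_n hq1 hp₀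
        obtain ⟨e₃, he₃, _, hp₃⟩ := hAj'
        have hx := hback j' e₃ n he₃ hp₃
        omega
      · have hpend₂ := hFORK (n + 1) (swapIdx n i) m₂ hs_n1 hp₂
        obtain ⟨_, hans₂⟩ := (pendingIn_take isQ s (n + 1) (swapIdx n i)).mp hpend₂
        exact hans₂ n (by omega) ⟨m₁, hs_n, hq1, hp₀⟩
    · have hx : swapIdx n k < swapIdx n j := swapIdx_lt n hk hexc
      exact hans0 (swapIdx n k) hx hAk'
  · intro j i hAji i' e' hi'j he' hq' hp'
    have hA' := (hA j i).mp hAji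
    rw [hT i'] at he'
    obtain ⟨e₀', he₀', hre'⟩ := Option.map_eq_some_iff.mp he'
    have hq₀' : isQ e₀'.1 := by rw [← hre'] at hq'; exact hq'
    have hp₀' : e₀'.2 = some (swapIdx n i) := by
      have hx : e'.2 = e₀'.2.map (swapIdx n) := by rw [← hre']; rfl
      rw [hp'] at hx
      obtain ⟨i₀, hi₀, hσ⟩ := Option.map_eq_some_iff.mp hx.symm
      rw [hi₀, ← hσ, swapIdx_invol]
    by_cases hexc : i' = n ∧ j = n + 1
    · exfalso
      obtain ⟨hi1, hj1⟩ := hexc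
      subst hj1
      rw [swapIdx_succ_self] at hA'
      rw [hi1, swapIdx_self, hs_n1] at he₀'
      injection he₀' with hh
      subst hh
      -- e₀' = m₂ is a question pointing to swapIdx n i, but m₁ (position n) answers it
      have hpend₂ := hFORK (n + 1) (swapIdx n i) m₂ hs_n1 hp₀'
      obtain ⟨_, hans₂⟩ := (pendingIn_take isQ s (n + 1) (swapIdx n i)).mp hpend₂
      exact hans₂ n (by omega) hA'
    · have hlt : swapIdx n i' < swapIdx n j := swapIdx_lt n hi'j hexc
      obtain ⟨j₀, hj₀lt, hAj₀⟩ := hWAIT (swapIdx n j) (swapIdx n i) hA'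
        (swapIdx n i') e₀' hlt he₀' hq₀' hp₀'
      refine ⟨swapIdx n j₀, ?_, ?_⟩
      · by_cases hexc2 : j₀ = n ∧ swapIdx n j = n + 1
        · exfalso
          obtain ⟨hj01, hjn⟩ := hexc2
          rw [hj01] at hAj₀
          rw [hjn] at hA'
          -- m₁ answers swapIdx n i', m₂ answers swapIdx n i, and the question at
          -- swapIdx n i' points to swapIdx n i : forbidden by hna
          obtain ⟨em₁, hem₁, hqm₁, hpm₁⟩ := hAj₀
          rw [hs_n] at hem₁
          injection hem₁ with hh1
          subst hh1
          obtain ⟨em₂, hem₂, hqm₂, hpm₂⟩ := hA'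
          rw [hs_n1] at hem₂
          injection hem₂ with hh2
          subst hh2
          exact hna ⟨hqm₁, hqm₂, swapIdx n i', swapIdx n i, e₀', hpm₁, hpm₂, he₀', hp₀'⟩
        · have hx := swapIdx_lt n hj₀lt hexc2
          rwa [swapIdx_invol] at hx
      · exact (hA (swapIdx n j₀) i').mpr (by rw [swapIdx_invol]; exact hAj₀)
end
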